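/- Let G be a connected graph, S a connected dominating set of G, and v ∈ S. Then Dominator has a strategy to start the Dominator-start connected domination game by playing v and to play only vertices from S throughout the game; consequently the game lasts at most 2|S| − 1 moves. -/

import Mathlib

open Finset

namespace ConnDomGame

variable {V : Type*} [Fintype V] [DecidableEq V]

/-- The closed neighborhood of a finite set of vertices. -/
def nbhd (G : SimpleGraph V) [DecidableRel G.Adj] (D : Finset V) : Finset V :=
  univ.filter fun u => u ∈ D ∨ ∃ v ∈ D, G.Adj u v

/-- The legal moves in the connected domination game on `G` with predominated set `S`,
from the position where the set of played vertices is `D`: a legal move must dominate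
a not-yet-dominated vertex and (except for the first move) be adjacent to a played vertex. -/
def legalMoves (G : SimpleGraph V) [DecidableRel G.Adj] (S D : Finset V) : Finset V :=
  univ.filter fun v =>
    ¬ (nbhd G {v} ⊆ S ∪ nbhd G D) ∧ (D = ∅ ∨ ∃ u ∈ D, G.Adj v u)

/-- Optimal number of further moves in the connected domination game on `G` with
predominated set `S`, from the position with played set `D`; `turn = true` means
Dominator (the minimizer) is to move.  The value is `⊤` if the player to move can
force the game to get stuck with an undominated vertex remaining.  The fuel
argument `n` is sufficient whenever `n + D.card ≥ Fintype.card V`. -/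
noncomputable def val (G : SimpleGraph V) [DecidableRel G.Adj] (S : Finset V) :
    Bool → ℕ → Finset V → ℕ∞
  | _, 0, D => if univ ⊆ S ∪ nbhd G D then 0 else ⊤
  | turn, n + 1, D =>
    if h : (legalMoves G S D).Nonempty then
      if turn then
        1 + (legalMoves G S D).inf' h fun v => val G S false n (insert v D)
      else
        1 + (legalMoves G S D).sup' h fun v => val G S true n (insert v D)
    else if univ ⊆ S ∪ nbhd G D then 0 else ⊤

/-- The Dominator-start game connected domination number of `G` with the vertices of `S`
predominated (`γ_cg(G|S)`; for `S = ∅` this is `γ_cg(G)`). -/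
noncomputable def gammaCG (G : SimpleGraph V) [DecidableRel G.Adj] (S : Finset V) : ℕ∞ :=
  val G S true (Fintype.card V) ∅

/-- The Staller-start game connected domination number of `G` with `S` predominated. -/
noncomputable def gammaCG' (G : SimpleGraph V) [DecidableRel G.Adj] (S : Finset V) : ℕ∞ :=
  val G S false (Fintype.card V) ∅

/-- The connected domination number of `G` with the set `S` predominated:
minimum size of a set `D` inducing a connected subgraph and dominating all
vertices outside `S`. -/
noncomputable def gammaC (G : SimpleGraph V) (S : Finset V) : ℕ :=
  sInf {k | ∃ D : Finset V, D.card = k ∧ (G.induce (D : Set V)).Connected ∧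
    ∀ u, u ∈ S ∨ u ∈ D ∨ ∃ v ∈ D, G.Adj u v}

/-- `l` is a legal sequence of first moves of the connected domination game on `G`
with predominated set `S`. -/
def LegalSeq (G : SimpleGraph V) [DecidableRel G.Adj] (S : Finset V) (l : List V) : Prop :=
  ∀ i (h : i < l.length), l.get ⟨i, h⟩ ∈ legalMoves G S (l.take i).toFinset

end ConnDomGame

namespace ConnDomGame

/-- `l` is a play of a Dominator-start game consistent with Dominator's strategy `σ`:
the moves at even positions (Dominator's moves) are prescribed by `σ` applied to the
history so far. -/
def DomConsistent {V : Type*} (σ : List V → V) (l : List V) : Prop :=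
  ∀ i (h : i < l.length), Even i → l.get ⟨i, h⟩ = σ (l.take i)

section Aux

variable {V : Type*} [Fintype V] [DecidableEq V]

lemma mem_nbhd {G : SimpleGraph V} [DecidableRel G.Adj] {D : Finset V} {u : V} :
    u ∈ nbhd G D ↔ u ∈ D ∨ ∃ w ∈ D, G.Adj u w := by
  simp [nbhd]

lemma nbhd_empty (G : SimpleGraph V) [DecidableRel G.Adj] : nbhd G (∅ : Finset V) = ∅ := by
  ext u; simp [nbhd]

lemma subset_nbhd (G : SimpleGraph V) [DecidableRel G.Adj] (D : Finset V) : D ⊆ nbhd G D :=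
  fun u hu => mem_nbhd.2 (Or.inl hu)

lemma nbhd_mono {G : SimpleGraph V} [DecidableRel G.Adj] {D D' : Finset V} (h : D ⊆ D') :
    nbhd G D ⊆ nbhd G D' := by
  intro u hu
  rcases mem_nbhd.1 hu with hu | ⟨w, hw, ha⟩
  · exact mem_nbhd.2 (Or.inl (h hu))
  · exact mem_nbhd.2 (Or.inr ⟨w, h hw, ha⟩)

lemma mem_legal {G : SimpleGraph V} [DecidableRel G.Adj] {D : Finset V} {m : V} :
    m ∈ legalMoves G ∅ D ↔ ¬ nbhd G {m} ⊆ nbhd G D ∧ (D = ∅ ∨ ∃ u ∈ D, G.Adj m u) := by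
  simp [legalMoves]

lemma mem_nbhd_singleton {G : SimpleGraph V} [DecidableRel G.Adj] {m u : V} :
    u ∈ nbhd G {m} ↔ u = m ∨ G.Adj u m := by simp [nbhd]

lemma nbhd_singleton_subset {G : SimpleGraph V} [DecidableRel G.Adj] {D : Finset V} {m : V}
    (hm : m ∈ D) : nbhd G {m} ⊆ nbhd G D :=
  nbhd_mono (by simpa using hm)

lemma legal_of_boundary {G : SimpleGraph V} [DecidableRel G.Adj] {D : Finset V} {x y : V}
    (hx : x ∈ nbhd G D) (hy : y ∉ nbhd G D) (hxy : G.Adj x y) :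
    x ∈ legalMoves G ∅ D := by
  have hxD : x ∉ D := fun h => hy (mem_nbhd.2 (Or.inr ⟨x, h, hxy.symm⟩))
  rcases mem_nbhd.1 hx with h | h
  · exact absurd h hxD
  · refine mem_legal.2 ⟨fun hs => hy (hs ?_), Or.inr h⟩
    exact mem_nbhd_singleton.2 (Or.inr hxy.symm)

lemma exists_legal_of_undominated {G : SimpleGraph V} [DecidableRel G.Adj] (hG : G.Connected)
    {D : Finset V} (hD : D.Nonempty) {u : V} (hu : u ∉ nbhd G D) :
    (legalMoves G ∅ D).Nonempty := by
  obtain ⟨d, hd⟩ := hD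
  obtain ⟨p⟩ := hG d u
  obtain ⟨dart, _, hfst, hsnd⟩ := p.exists_boundary_dart {x | x ∈ nbhd G D}
    (subset_nbhd G D hd) hu
  exact ⟨dart.fst, legal_of_boundary hfst hsnd dart.adj⟩

lemma exists_legal_mem_S {G : SimpleGraph V} [DecidableRel G.Adj] {S : Finset V}
    (hdom : ∀ u, u ∈ nbhd G S) (hconn : (G.induce (S : Set V)).Connected)
    {D : Finset V} {v : V} (hv : v ∈ S) (hvD : v ∈ D) {u : V} (hu : u ∉ nbhd G D) :
    ∃ s ∈ S, s ∈ legalMoves G ∅ D := by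
  obtain ⟨s₀, hs₀S, hus₀⟩ : ∃ s₀ ∈ S, u ∈ nbhd G {s₀} := by
    rcases mem_nbhd.1 (hdom u) with h | ⟨w, hw, ha⟩
    · exact ⟨u, h, mem_nbhd_singleton.2 (Or.inl rfl)⟩
    · exact ⟨w, hw, mem_nbhd_singleton.2 (Or.inr ha)⟩
  by_cases hnb : s₀ ∈ nbhd G D
  · refine ⟨s₀, hs₀S, ?_⟩
    have hs₀D : s₀ ∉ D := fun h => hu (nbhd_singleton_subset h hus₀)
    rcases mem_nbhd.1 hnb with h | h
    · exact absurd h hs₀D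
    · exact mem_legal.2 ⟨fun hs => hu (hs hus₀), Or.inr h⟩
  · obtain ⟨p⟩ := hconn ⟨v, hv⟩ ⟨s₀, hs₀S⟩
    obtain ⟨dart, _, hfst, hsnd⟩ := p.exists_boundary_dart
      {x : (S : Set V) | (x : V) ∈ nbhd G D} (subset_nbhd G D hvD) hnb
    have hadj : G.Adj (dart.fst : V) (dart.snd : V) := dart.adj
    exact ⟨dart.fst, dart.fst.2, legal_of_boundary hfst hsnd hadj⟩

/-- Dominator's strategy: play `v` first; afterwards play any legal move inside `S`. -/
noncomputable def strat (G : SimpleGraph V) [DecidableRel G.Adj] (S : Finset V) (v : V) :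
    List V → V := fun l =>
  if l = [] then v
  else if h : (S ∩ legalMoves G ∅ l.toFinset).Nonempty then h.choose else v

lemma strat_nil (G : SimpleGraph V) [DecidableRel G.Adj] (S : Finset V) (v : V) :
    strat G S v [] = v := by simp [strat]

lemma first_legal (G : SimpleGraph V) [DecidableRel G.Adj] (v : V) :
    v ∈ legalMoves G ∅ (∅ : Finset V) := by
  refine mem_legal.2 ⟨?_, Or.inl rfl⟩
  rw [nbhd_empty]
  intro hs
  exact Finset.notMem_empty v (hs (mem_nbhd_singleton.2 (Or.inl rfl)))

lemma head_mem {G : SimpleGraph V} [DecidableRel G.Adj] {S : Finset V} {v : V} {l : List V}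
    (hc : DomConsistent (strat G S v) l) (hne : l ≠ []) : v ∈ l.toFinset := by
  have h0 : 0 < l.length := List.length_pos_iff.2 hne
  have h := hc 0 h0 Even.zero
  rw [List.take_zero, strat_nil] at h
  rw [List.mem_toFinset, ← h]
  exact List.get_mem _ _

lemma strat_spec {G : SimpleGraph V} [DecidableRel G.Adj] {S : Finset V}
    (hdom : ∀ u, u ∈ nbhd G S) (hconn : (G.induce (S : Set V)).Connected)
    {v : V} (hv : v ∈ S) {l : List V} (hc : DomConsistent (strat G S v) l)
    (hne : (legalMoves G ∅ l.toFinset).Nonempty) :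
    strat G S v l ∈ legalMoves G ∅ l.toFinset ∧ strat G S v l ∈ S := by
  by_cases hl0 : l = []
  · subst hl0
    rw [strat_nil, List.toFinset_nil]
    exact ⟨first_legal G v, hv⟩
  · have hvD : v ∈ l.toFinset := head_mem hc hl0
    obtain ⟨m, hm⟩ := hne
    obtain ⟨u, hu1, hu2⟩ := Finset.not_subset.1 (mem_legal.1 hm).1
    obtain ⟨s, hsS, hsl⟩ := exists_legal_mem_S hdom hconn hv hvD hu2
    have hne2 : (S ∩ legalMoves G ∅ l.toFinset).Nonempty :=
      ⟨s, Finset.mem_inter.2 ⟨hsS, hsl⟩⟩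
    have : strat G S v l = hne2.choose := by
      rw [strat, if_neg hl0, dif_pos hne2]
    rw [this]
    have hspec := hne2.choose_spec
    rw [Finset.mem_inter] at hspec
    exact ⟨hspec.2, hspec.1⟩

lemma get_mem_take {l : List V} {j k : ℕ} (hj : j < k) (h : j < l.length) :
    l.get ⟨j, h⟩ ∈ (l.take k).toFinset := by
  rw [List.mem_toFinset]
  have hlen : j < (l.take k).length := by simp [List.length_take]; omega
  have he : (l.take k).get ⟨j, hlen⟩ = l.get ⟨j, h⟩ := by
    simp [List.get_eq_getElem, List.getElem_take]
  rw [← he]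
  exact List.get_mem _ _

lemma legalSeq_take {G : SimpleGraph V} [DecidableRel G.Adj] {S : Finset V} {l : List V}
    (hl : LegalSeq G S l) (n : ℕ) : LegalSeq G S (l.take n) := by
  intro i h
  have hlen : i < min n l.length := by simpa [List.length_take] using h
  have hi : i < l.length := lt_of_lt_of_le hlen (min_le_right _ _)
  have h1 : (l.take n).get ⟨i, h⟩ = l.get ⟨i, hi⟩ := by
    simp [List.get_eq_getElem, List.getElem_take]
  have h2 : (l.take n).take i = l.take i := by
    rw [List.take_take]
    congr 1
    omega
  rw [h1, h2]
  exact hl i hi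

lemma domConsistent_take {V' : Type*} {σ : List V' → V'} {l : List V'}
    (hc : DomConsistent σ l) (n : ℕ) : DomConsistent σ (l.take n) := by
  intro i h he
  have hlen : i < min n l.length := by simpa [List.length_take] using h
  have hi : i < l.length := lt_of_lt_of_le hlen (min_le_right _ _)
  have h1 : (l.take n).get ⟨i, h⟩ = l.get ⟨i, hi⟩ := by
    simp [List.get_eq_getElem, List.getElem_take]
  have h2 : (l.take n).take i = l.take i := by
    rw [List.take_take]
    congr 1
    omega
  rw [h1, h2]
  exact hc i hi he

lemma legalSeq_ne {G : SimpleGraph V} [DecidableRel G.Adj] {l : List V}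
    (hl : LegalSeq G ∅ l) {i j : ℕ} (hij : i < j) (hi : i < l.length) (hj : j < l.length) :
    l.get ⟨i, hi⟩ ≠ l.get ⟨j, hj⟩ := by
  intro he
  have hmem : l.get ⟨j, hj⟩ ∈ (l.take j).toFinset := he ▸ get_mem_take hij hi
  exact (mem_legal.1 (hl j hj)).1 (nbhd_singleton_subset hmem)

lemma even_get_mem {G : SimpleGraph V} [DecidableRel G.Adj] {S : Finset V}
    (hdom : ∀ u, u ∈ nbhd G S) (hconn : (G.induce (S : Set V)).Connected)
    {v : V} (hv : v ∈ S) {l : List V} (hl : LegalSeq G ∅ l)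
    (hc : DomConsistent (strat G S v) l) {i : ℕ} (h : i < l.length) (he : Even i) :
    l.get ⟨i, h⟩ ∈ S := by
  have hne : (legalMoves G ∅ (l.take i).toFinset).Nonempty := ⟨l.get ⟨i, h⟩, hl i h⟩
  have := (strat_spec hdom hconn hv (domConsistent_take hc i) hne).2
  rw [hc i h he]
  exact this

lemma card_even_range (n : ℕ) :
    ((Finset.range n).filter (fun j => Even j)).card = (n + 1) / 2 := by
  induction n with
  | zero => simp
  | succ n ih =>
    rw [Finset.range_add_one, Finset.filter_insert]
    by_cases h : Even n
    · rw [if_pos h, Finset.card_insert_of_notMem (by simp), ih]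
      rw [Nat.even_iff] at h
      omega
    · rw [if_neg h, ih]
      rw [Nat.even_iff] at h
      omega

end Aux

/-- If `S` is a connected dominating set of a connected graph `G` and `v ∈ S`, then
Dominator has a strategy for the Dominator-start connected domination game which starts
by playing `v`, always plays legal moves from `S`, and guarantees that when the game is
over all vertices are dominated and at most `2|S| − 1` moves have been made. -/
theorem dominator_strategy_within_connected_dominating_set {V : Type*} [Fintype V]
    [DecidableEq V] (G : SimpleGraph V) [DecidableRel G.Adj] (hG : G.Connected)
    (S : Finset V) (hdom : ∀ u, u ∈ nbhd G S)
    (hconn : (G.induce (S : Set V)).Connected) (v : V) (hv : v ∈ S) :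
    ∃ σ : List V → V,
      σ [] = v ∧
      (∀ l, LegalSeq G ∅ l → DomConsistent σ l → Even l.length →
        (legalMoves G ∅ l.toFinset).Nonempty →
        σ l ∈ legalMoves G ∅ l.toFinset ∧ σ l ∈ S) ∧
      (∀ l, LegalSeq G ∅ l → DomConsistent σ l → legalMoves G ∅ l.toFinset = ∅ →
        (∀ u, u ∈ nbhd G l.toFinset) ∧ l.length ≤ 2 * S.card - 1) := by
  classical
  refine ⟨strat G S v, strat_nil G S v, ?_, ?_⟩
  · intro l hl hc _ hne
    exact strat_spec hdom hconn hv hc hne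
  · intro l hl hc hemp
    have hlne : l ≠ [] := by
      rintro rfl
      rw [List.toFinset_nil] at hemp
      exact Finset.notMem_empty v (hemp ▸ first_legal G v)
    have hvD : v ∈ l.toFinset := head_mem hc hlne
    have hdomall : ∀ u, u ∈ nbhd G l.toFinset := by
      intro u
      by_contra hu
      obtain ⟨m, hm⟩ := exists_legal_of_undominated hG ⟨v, hvD⟩ hu
      rw [hemp] at hm
      exact Finset.notMem_empty m hm
    refine ⟨hdomall, ?_⟩
    set n := l.length with hn
    set s := S.card with hs
    have hs1 : 1 ≤ s := Finset.card_pos.2 ⟨v, hv⟩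
    set f : ℕ → V := fun j => l.getD j v with hf
    have hfeq : ∀ j (h : j < n), f j = l.get ⟨j, h⟩ := by
      intro j h
      simp only [hf, List.get_eq_getElem]
      exact List.getD_eq_getElem l v h
    set T : Finset ℕ := (Finset.range n).filter (fun j => Even j) with hT
    have hTmem : ∀ j ∈ T, j < n ∧ Even j := by
      intro j hj
      rw [hT, Finset.mem_filter, Finset.mem_range] at hj
      exact hj
    have hmapS : ∀ j ∈ T, f j ∈ S := by
      intro j hj
      obtain ⟨hjn, hje⟩ := hTmem j hj
      rw [hfeq j hjn]
      exact even_get_mem hdom hconn hv hl hc hjn hje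
    have hinj : Set.InjOn f T := by
      intro j hj k hk hfe
      obtain ⟨hjn, _⟩ := hTmem j hj
      obtain ⟨hkn, _⟩ := hTmem k hk
      by_contra hne
      rcases Nat.lt_or_ge j k with h | h
      · exact legalSeq_ne hl h hjn hkn (by rw [← hfeq j hjn, ← hfeq k hkn, hfe])
      · have h' : k < j := lt_of_le_of_ne h (Ne.symm hne)
        exact legalSeq_ne hl h' hkn hjn (by rw [← hfeq j hjn, ← hfeq k hkn, hfe])
    have hcardT : T.card = (n + 1) / 2 := card_even_range n
    have hle : (n + 1) / 2 ≤ s := by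
      rw [← hcardT, hs]
      exact Finset.card_le_card_of_injOn f hmapS hinj
    have hne2s : n ≠ 2 * s := by
      intro hn2
      -- Dominator has made s moves, all distinct, in S, so S is fully played
      -- before the last (Staller) move, contradicting its legality.
      have hcardT' : T.card = s := by rw [hcardT]; omega
      have himage : T.image f = S := by
        apply Finset.eq_of_subset_of_card_le
        · intro x hx
          obtain ⟨j, hj, rfl⟩ := Finset.mem_image.1 hx
          exact hmapS j hj
        · rw [Finset.card_image_of_injOn hinj, hcardT']
      have hSsub : S ⊆ (l.take (n - 1)).toFinset := by
        intro x hx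
        rw [← himage] at hx
        obtain ⟨j, hj, rfl⟩ := Finset.mem_image.1 hx
        obtain ⟨hjn, hje⟩ := hTmem j hj
        have hjlt : j < n - 1 := by
          rw [Nat.even_iff] at hje
          omega
        rw [hfeq j hjn]
        exact get_mem_take hjlt hjn
      have hn1 : n - 1 < n := by omega
      have hlast := hl (n - 1) hn1
      obtain ⟨u, _, hu2⟩ := Finset.not_subset.1 (mem_legal.1 hlast).1
      exact hu2 (nbhd_mono hSsub (hdom u))
    omega

end ConnDomGame
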